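/- arXiv:1211.5757 — 3 statements merged into one kernel-verified Lean document; each statement's English description precedes it below -/
import Mathlib

section
/- (Theorem 1, first direction) For every point (f, α, β) of the polytope Q_p there exists a vector w = (w_{j,b})_{j∈J, b∈B_j} such that (f, w) lies in the polytope Q_f. -/
attribute [local instance] Classical.propDecidable

noncomputable section

variable {R : Type*}

/-- `ξ(r) ∈ ℝ^{q−1}`, indexed by the nonzero ring elements. -/
def xi [Ring R] (r : R) : {ρ : R // ρ ≠ 0} → ℝ :=
  fun ρ => if (ρ : R) = r then 1 else 0

/-- `I_j`, the support of the `j`-th row of `H`. -/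
abbrev Isupp [Ring R] {m n : ℕ} (H : Matrix (Fin m) (Fin n) R) (j : Fin m) :=
  {i : Fin n // H j i ≠ 0}

/-- `J_i`, the support of the `i`-th column of `H`. -/
abbrev Jsupp [Ring R] {m n : ℕ} (H : Matrix (Fin m) (Fin n) R) (i : Fin n) :=
  {j : Fin m // H j i ≠ 0}

/-- The local single parity-check code `B_j = {(b_i)_{i∈I_j} : ∑_{i∈I_j} b_i·H_{j,i} = 0}`. -/
abbrev Bcode [Ring R] [Fintype R] {m n : ℕ} (H : Matrix (Fin m) (Fin n) R) (j : Fin m) :=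
  {b : Isupp H j → R // (∑ i, b i * H j i.val) = 0}

/-- The repetition code `A_i` of constant tuples indexed by `{0} ∪ J_i`. -/
abbrev Acode [Ring R] {m n : ℕ} (H : Matrix (Fin m) (Fin n) R) (i : Fin n) :=
  {a : Option (Jsupp H i) → R // ∀ k k', a k = a k'}

/- Take `w = β`. Every codeword of the repetition code `A_i` is constant, so
`u_{i,0} = u_{i,j} = v_{j,i}`, and the `ρ`-entry of `v_{j,i}` is the `β_j`-mass of the codewords `b` with `b_i = ρ`. -/

theorem sum_mul_xi_eq_sum_filter [Ring R] [DecidableEq R] {ι : Type*} [Fintype ι]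
    (w : ι → ℝ) (g : ι → R) (ρ : {ρ : R // ρ ≠ 0}) :
    ∑ b, w b * xi (g b) ρ = ∑ b ∈ Finset.univ.filter (fun b => g b = (ρ : R)), w b := by
  simp only [Finset.sum_filter, xi, mul_ite, mul_one, mul_zero, eq_comm]

theorem Acode.sum_mul_xi_eq [Ring R] {m n : ℕ} {H : Matrix (Fin m) (Fin n) R} {i : Fin n}
    [Fintype (Acode H i)] (α : Acode H i → ℝ) (k k' : Option (Jsupp H i))
    (ρ : {ρ : R // ρ ≠ 0}) :
    ∑ a, α a * xi (a.val k) ρ = ∑ a, α a * xi (a.val k') ρ :=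
  Finset.sum_congr rfl fun a _ => by rw [a.prop k k']

theorem Qp_subset_Qf_general [Ring R] [Fintype R] [DecidableEq R] {m n : ℕ}
    (H : Matrix (Fin m) (Fin n) R)
    (f : Fin n → {ρ : R // ρ ≠ 0} → ℝ)
    (α : (i : Fin n) → Acode H i → ℝ)
    (β : (j : Fin m) → Bcode H j → ℝ)
    (hβ0 : ∀ j b, 0 ≤ β j b)
    (hβ1 : ∀ j, ∑ b, β j b = 1)
    -- `f_i = u_{i,0}` where `u_i = ∑_{a∈A_i} α_{i,a}·Ξ(a)`
    (hf : ∀ (i : Fin n) (ρ : {ρ : R // ρ ≠ 0}),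
      f i ρ = ∑ a : Acode H i, α i a * xi (a.val none) ρ)
    -- `u_{i,j} = v_{j,i}` where `v_j = ∑_{b∈B_j} β_{j,b}·Ξ(b)`
    (huv : ∀ (j : Fin m) (i : Fin n) (hij : H j i ≠ 0) (ρ : {ρ : R // ρ ≠ 0}),
      (∑ a : Acode H i, α i a * xi (a.val (some ⟨j, hij⟩)) ρ)
        = ∑ b : Bcode H j, β j b * xi (b.val ⟨i, hij⟩) ρ) :
    ∃ w : (j : Fin m) → Bcode H j → ℝ,
      (∀ j b, 0 ≤ w j b) ∧
      (∀ j, ∑ b, w j b = 1) ∧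
      (∀ (j : Fin m) (i : Fin n) (hij : H j i ≠ 0) (ρ : {ρ : R // ρ ≠ 0}),
        f i ρ = ∑ b ∈ Finset.univ.filter (fun b : Bcode H j => b.val ⟨i, hij⟩ = (ρ : R)),
          w j b) := by
  refine ⟨β, hβ0, hβ1, fun j i hij ρ => ?_⟩
  rw [hf, Acode.sum_mul_xi_eq (α i) none (some ⟨j, hij⟩), huv, sum_mul_xi_eq_sum_filter]

/-- (Theorem 1, first direction) For every point `(f, α, β)` of the polytope `Q_p`
there exists `w` such that `(f, w)` lies in the polytope `Q_f`. -/
theorem Qp_subset_Qf [Ring R] [Fintype R] [DecidableEq R] {m n : ℕ}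
    (H : Matrix (Fin m) (Fin n) R)
    (f : Fin n → {ρ : R // ρ ≠ 0} → ℝ)
    (α : (i : Fin n) → Acode H i → ℝ)
    (β : (j : Fin m) → Bcode H j → ℝ)
    (hα0 : ∀ i a, 0 ≤ α i a)
    (hα1 : ∀ i, ∑ a, α i a = 1)
    (hβ0 : ∀ j b, 0 ≤ β j b)
    (hβ1 : ∀ j, ∑ b, β j b = 1)
    -- `f_i = u_{i,0}` where `u_i = ∑_{a∈A_i} α_{i,a}·Ξ(a)`
    (hf : ∀ (i : Fin n) (ρ : {ρ : R // ρ ≠ 0}),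
      f i ρ = ∑ a : Acode H i, α i a * xi (a.val none) ρ)
    -- `u_{i,j} = v_{j,i}` where `v_j = ∑_{b∈B_j} β_{j,b}·Ξ(b)`
    (huv : ∀ (j : Fin m) (i : Fin n) (hij : H j i ≠ 0) (ρ : {ρ : R // ρ ≠ 0}),
      (∑ a : Acode H i, α i a * xi (a.val (some ⟨j, hij⟩)) ρ)
        = ∑ b : Bcode H j, β j b * xi (b.val ⟨i, hij⟩) ρ) :
    ∃ w : (j : Fin m) → Bcode H j → ℝ,
      (∀ j b, 0 ≤ w j b) ∧
      (∀ j, ∑ b, w j b = 1) ∧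
      (∀ (j : Fin m) (i : Fin n) (hij : H j i ≠ 0) (ρ : {ρ : R // ρ ≠ 0}),
        f i ρ = ∑ b ∈ Finset.univ.filter (fun b : Bcode H j => b.val ⟨i, hij⟩ = (ρ : R)),
          w j b) :=
  Qp_subset_Qf_general H f α β hβ0 hβ1 hf huv
end
end

section
/- (Lemma 1) The function ĥ : ℝ → ℝ attains its maximum at a unique point x*, and this point is given by x* = (1/2)·((V̄ − V) − (C̄ − C)). -/
attribute [local instance] Classical.propDecidable

noncomputable section

variable {R : Type*}

/-- The soft-minimum `min^{(κ)}_l z_l = −(1/κ)·log(∑_l exp(−κ z_l))` of a finite family. -/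
def softmin (κ : ℝ) {L : Type*} [Fintype L] (z : L → ℝ) : ℝ :=
  -(1 / κ) * Real.log (∑ l, Real.exp (-κ * z l))

/-- The inner product `⟨u, Ξ(c)⟩` of a block vector `u` with `Ξ` of a tuple `c`. -/
def ipXi [Ring R] [Fintype R] {ι : Type*} [Fintype ι] (u : ι → {ρ : R // ρ ≠ 0} → ℝ) (c : ι → R) : ℝ :=
  ∑ k, ∑ ρ, u k ρ * xi (c k) ρ

/-- The inner product `⟨u, Ξ(c)⟩` where the block/entry at position `k0` is omitted. -/
def ipXiE [Ring R] [Fintype R] {ι : Type*} [Fintype ι] [DecidableEq ι]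
    (u : ι → {ρ : R // ρ ≠ 0} → ℝ) (c : ι → R) (k0 : ι) : ℝ :=
  ∑ k ∈ Finset.univ.erase k0, ∑ ρ, u k ρ * xi (c k) ρ

/-- The block vector `û_i` in which the single coordinate `û_{i,j}^{(r)}` is replaced by `x`. -/
def uX [Ring R] {m n : ℕ} {H : Matrix (Fin m) (Fin n) R} {i : Fin n}
    (uh : Option (Jsupp H i) → {ρ : R // ρ ≠ 0} → ℝ) (jh : Jsupp H i) (r : R) (x : ℝ) :
    Option (Jsupp H i) → {ρ : R // ρ ≠ 0} → ℝ :=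
  fun k ρ => if k = some jh ∧ (ρ : R) = r then x else uh k ρ

/-- The block vector `v̂_j` in which the single coordinate `v̂_{j,i}^{(r)}` is replaced by `−x`. -/
def vX [Ring R] {m n : ℕ} {H : Matrix (Fin m) (Fin n) R} {j : Fin m}
    (vh : Isupp H j → {ρ : R // ρ ≠ 0} → ℝ) (ih : Isupp H j) (r : R) (x : ℝ) :
    Isupp H j → {ρ : R // ρ ≠ 0} → ℝ :=
  fun k ρ => if k = ih ∧ (ρ : R) = r then -x else vh k ρ

/-- `ĥ(x) = min^{(κ)}_{a∈A_i} ⟨−û_i, Ξ(a)⟩ + min^{(κ)}_{b∈B_j} ⟨−v̂_j, Ξ(b)⟩`, as a function of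
the single coordinate `x = û_{i,j}^{(r)}` (with `v̂_{j,i}^{(r)} = −x`, all other entries fixed). -/
def hhat [Ring R] [Fintype R] {m n : ℕ} (H : Matrix (Fin m) (Fin n) R)
    (j : Fin m) (i : Fin n) (hij : H j i ≠ 0) (r : R) (κ : ℝ)
    (uh : Option (Jsupp H i) → {ρ : R // ρ ≠ 0} → ℝ)
    (vh : Isupp H j → {ρ : R // ρ ≠ 0} → ℝ) (x : ℝ) : ℝ :=
  softmin κ (fun a : Acode H i => ipXi (fun k ρ => -(uX uh ⟨j, hij⟩ r x k ρ)) a.val)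
    + softmin κ (fun b : Bcode H j => ipXi (fun k ρ => -(vX vh ⟨i, hij⟩ r x k ρ)) b.val)

/-- `V̄ = −min^{(κ)}_{a∈A_i, a_j≠r} ⟨−û_i, Ξ(a)⟩` (independent of the coordinate `x`). -/
def Vbar [Ring R] [Fintype R] {m n : ℕ} (H : Matrix (Fin m) (Fin n) R)
    (j : Fin m) (i : Fin n) (hij : H j i ≠ 0) (r : R) (κ : ℝ)
    (uh : Option (Jsupp H i) → {ρ : R // ρ ≠ 0} → ℝ) : ℝ :=
  -(softmin κ (fun a : {a : Acode H i // a.val (some ⟨j, hij⟩) ≠ r} =>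
      ipXi (fun k ρ => -(uh k ρ)) a.val.val))

/-- `V = −min^{(κ)}_{a∈A_i, a_j=r} ⟨−ũ_i, Ξ(ã)⟩`, the `j`-th block/entry being omitted. -/
def Vsm [Ring R] [Fintype R] {m n : ℕ} (H : Matrix (Fin m) (Fin n) R)
    (j : Fin m) (i : Fin n) (hij : H j i ≠ 0) (r : R) (κ : ℝ)
    (uh : Option (Jsupp H i) → {ρ : R // ρ ≠ 0} → ℝ) : ℝ :=
  -(softmin κ (fun a : {a : Acode H i // a.val (some ⟨j, hij⟩) = r} =>
      ipXiE (fun k ρ => -(uh k ρ)) a.val.val (some ⟨j, hij⟩)))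

/-- `C̄ = −min^{(κ)}_{b∈B_j, b_i≠r} ⟨−v̂_j, Ξ(b)⟩` (independent of the coordinate `x`). -/
def Cbar [Ring R] [Fintype R] {m n : ℕ} (H : Matrix (Fin m) (Fin n) R)
    (j : Fin m) (i : Fin n) (hij : H j i ≠ 0) (r : R) (κ : ℝ)
    (vh : Isupp H j → {ρ : R // ρ ≠ 0} → ℝ) : ℝ :=
  -(softmin κ (fun b : {b : Bcode H j // b.val ⟨i, hij⟩ ≠ r} =>
      ipXi (fun k ρ => -(vh k ρ)) b.val.val))

/-- `C = −min^{(κ)}_{b∈B_j, b_i=r} ⟨−ṽ_j, Ξ(b̃)⟩`, the `i`-th block/entry being omitted. -/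
def Csm [Ring R] [Fintype R] {m n : ℕ} (H : Matrix (Fin m) (Fin n) R)
    (j : Fin m) (i : Fin n) (hij : H j i ≠ 0) (r : R) (κ : ℝ)
    (vh : Isupp H j → {ρ : R // ρ ≠ 0} → ℝ) : ℝ :=
  -(softmin κ (fun b : {b : Bcode H j // b.val ⟨i, hij⟩ = r} =>
      ipXiE (fun k ρ => -(vh k ρ)) b.val.val ⟨i, hij⟩))

/-!
Splitting each partition function according to whether the coordinate carrying `x` is `r`
gives `exp (-κ ĥ(x)) = (e^{κV̄} + e^{κ(V + x)}) (e^{κC̄} + e^{κ(C - x)})`. Expanded, this is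
`e^{κ(V̄ + C̄)} + e^{κ(V + C)} + 2 e^{κm} cosh (κ (x - x*))` with `m = (V̄ + V + C̄ + C) / 2`,
so `ĥ = -(1/κ) log (…)` is maximal exactly where `cosh` is minimal, at `x = x*`.
-/

open Real

theorem exp_add_exp_mul_exp_add_exp (κ a b c d x : ℝ) :
    (exp (κ * a) + exp (κ * (b + x))) * (exp (κ * c) + exp (κ * (d - x)))
      = exp (κ * (a + c)) + exp (κ * (b + d))
        + 2 * exp (κ * ((a + b + c + d) / 2))
          * cosh (κ * (x - 1 / 2 * ((a - b) - (c - d)))) := by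
  set m := κ * ((a + b + c + d) / 2)
  set y := κ * (x - 1 / 2 * ((a - b) - (c - d)))
  have exp_mul_exp (s t u : ℝ) (h : s + t = u) : exp s * exp t = exp u := by rw [← exp_add, h]
  rw [cosh_eq]
  linear_combination exp_mul_exp (κ * a) (κ * c) (κ * (a + c)) (by ring)
    + exp_mul_exp (κ * (b + x)) (κ * (d - x)) (κ * (b + d)) (by ring)
    + exp_mul_exp (κ * a) (κ * (d - x)) (m - y) (by ring)
    + exp_mul_exp (κ * (b + x)) (κ * c) (m + y) (by ring)
    - exp_mul_exp m (-y) (m - y) (by ring) - exp_mul_exp m y (m + y) rfl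

theorem neg_log_exp_add_exp_unique_max {κ : ℝ} (hκ : 0 < κ) (a b c d : ℝ) (f : ℝ → ℝ)
    (hf : ∀ x, f x = -(1 / κ) * log (exp (κ * a) + exp (κ * (b + x)))
      + -(1 / κ) * log (exp (κ * c) + exp (κ * (d - x)))) :
    (∀ y, f y ≤ f (1 / 2 * ((a - b) - (c - d)))) ∧
      ∀ y, (∀ z, f z ≤ f y) → y = 1 / 2 * ((a - b) - (c - d)) := by
  set xs := 1 / 2 * ((a - b) - (c - d))
  have hf' : ∀ x, f x = -(1 / κ) * log (exp (κ * (a + c)) + exp (κ * (b + d))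
      + 2 * exp (κ * ((a + b + c + d) / 2)) * cosh (κ * (x - xs))) := fun x => by
    rw [hf, ← mul_add, ← log_mul (by positivity) (by positivity), exp_add_exp_mul_exp_add_exp]
  have hle_iff : ∀ y z, f y ≤ f z ↔ |κ * (z - xs)| ≤ |κ * (y - xs)| := fun y z => by
    rw [hf', hf', neg_mul, neg_mul, neg_le_neg_iff,
      mul_le_mul_iff_of_pos_left (one_div_pos.2 hκ),
      log_le_log_iff (by positivity) (by positivity), add_le_add_iff_left,
      mul_le_mul_iff_of_pos_left (by positivity), cosh_le_cosh]
  refine ⟨fun y => (hle_iff y xs).2 ?_, fun y hy => ?_⟩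
  · rw [sub_self, mul_zero, abs_zero]
    exact abs_nonneg _
  · have h := (hle_iff xs y).1 (hy xs)
    rw [sub_self, mul_zero, abs_zero, abs_nonpos_iff, mul_eq_zero, sub_eq_zero] at h
    exact h.resolve_left hκ.ne'

section BlockInnerProduct

variable [Ring R] [Fintype R] {ι : Type*} [Fintype ι]

theorem sum_mul_xi {r : R} (hr : r ≠ 0) (w : {ρ : R // ρ ≠ 0} → ℝ) :
    ∑ ρ, w ρ * xi r ρ = w ⟨r, hr⟩ := by
  rw [Fintype.sum_eq_single ⟨r, hr⟩ fun ρ hρ => ?_]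
  · simp [xi]
  · have hρr : (ρ : R) ≠ r := fun h => hρ (Subtype.ext h)
    simp [xi, hρr]

theorem ipXi_congr {u u' : ι → {ρ : R // ρ ≠ 0} → ℝ} {c : ι → R}
    (h : ∀ k (ρ : {ρ : R // ρ ≠ 0}), (ρ : R) = c k → u k ρ = u' k ρ) :
    ipXi u c = ipXi u' c := by
  refine Finset.sum_congr rfl fun k _ => Finset.sum_congr rfl fun ρ _ => ?_
  by_cases hρ : (ρ : R) = c k
  · rw [h k ρ hρ]
  · simp [xi, hρ]

variable {u u' : ι → {ρ : R // ρ ≠ 0} → ℝ} {k₀ : ι} {r : R}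

theorem ipXi_eq_of_apply_ne
    (hu : ∀ k (ρ : {ρ : R // ρ ≠ 0}), ¬(k = k₀ ∧ (ρ : R) = r) → u' k ρ = u k ρ)
    {c : ι → R} (hc : c k₀ ≠ r) : ipXi u' c = ipXi u c :=
  ipXi_congr fun k ρ hρ => hu k ρ fun ⟨hk, hρr⟩ => hc (hk ▸ hρ ▸ hρr)

theorem ipXi_eq_add_ipXiE [DecidableEq ι] (hr : r ≠ 0)
    (hu : ∀ k (ρ : {ρ : R // ρ ≠ 0}), ¬(k = k₀ ∧ (ρ : R) = r) → u' k ρ = u k ρ)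
    {c : ι → R} (hc : c k₀ = r) : ipXi u' c = u' k₀ ⟨r, hr⟩ + ipXiE u c k₀ := by
  rw [ipXi, ← Finset.add_sum_erase _ _ (Finset.mem_univ k₀), hc, sum_mul_xi hr]
  refine congrArg _ (Finset.sum_congr rfl fun k hk => Finset.sum_congr rfl fun ρ _ => ?_)
  rw [hu k ρ fun h => Finset.ne_of_mem_erase hk h.1]

theorem sum_exp_neg_ipXi_split [DecidableEq ι] (hr : r ≠ 0)
    (hu : ∀ k (ρ : {ρ : R // ρ ≠ 0}), ¬(k = k₀ ∧ (ρ : R) = r) → u' k ρ = u k ρ)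
    {L : Type*} [Fintype L] (c : L → ι → R)
    [Fintype {l // c l k₀ ≠ r}] [Fintype {l // c l k₀ = r}] (κ : ℝ) :
    ∑ l, exp (-κ * ipXi u' (c l))
      = ∑ l : {l // c l k₀ ≠ r}, exp (-κ * ipXi u (c l))
        + (∑ l : {l // c l k₀ = r}, exp (-κ * ipXiE u (c l) k₀))
          * exp (-κ * u' k₀ ⟨r, hr⟩) := by
  classical
  rw [← Fintype.sum_subtype_add_sum_subtype (fun l => c l k₀ = r), add_comm, Finset.sum_mul]
  congr 1
  · have h (l : {l // c l k₀ ≠ r}) :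
        exp (-κ * ipXi u' (c l)) = exp (-κ * ipXi u (c l)) := by
      rw [ipXi_eq_of_apply_ne hu l.2]
    convert Fintype.sum_congr _ _ h
  · have h (l : {l // c l k₀ = r}) : exp (-κ * ipXi u' (c l))
        = exp (-κ * ipXiE u (c l) k₀) * exp (-κ * u' k₀ ⟨r, hr⟩) := by
      rw [ipXi_eq_add_ipXiE hr hu l.2, mul_add, exp_add, mul_comm]
    convert Fintype.sum_congr _ _ h

end BlockInnerProduct

theorem exp_mul_neg_softmin {κ : ℝ} (hκ : κ ≠ 0) {L : Type*} [Fintype L] [Nonempty L]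
    (z : L → ℝ) : exp (κ * -softmin κ z) = ∑ l, exp (-κ * z l) := by
  rw [softmin, neg_mul, neg_neg, ← mul_assoc, mul_one_div_cancel hκ, one_mul,
    exp_log (Finset.sum_pos (fun l _ => exp_pos _) Finset.univ_nonempty)]

section LocalCodes

variable [Ring R] [Fintype R] {m n : ℕ} {H : Matrix (Fin m) (Fin n) R} {j : Fin m} {i : Fin n}
  {r : R} {κ : ℝ}

theorem sum_exp_neg_ipXi_uX (hij : H j i ≠ 0) (hr : r ≠ 0) (hκ : κ ≠ 0)
    (uh : Option (Jsupp H i) → {ρ : R // ρ ≠ 0} → ℝ) (x : ℝ) :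
    ∑ a : Acode H i, exp (-κ * ipXi (fun k ρ => -(uX uh ⟨j, hij⟩ r x k ρ)) a.val)
      = exp (κ * Vbar H j i hij r κ uh) + exp (κ * (Vsm H j i hij r κ uh + x)) := by
  have : Nonempty {a : Acode H i // a.val (some ⟨j, hij⟩) ≠ r} :=
    ⟨⟨⟨fun _ => 0, fun _ _ => rfl⟩, hr.symm⟩⟩
  have : Nonempty {a : Acode H i // a.val (some ⟨j, hij⟩) = r} :=
    ⟨⟨⟨fun _ => r, fun _ _ => rfl⟩, rfl⟩⟩
  rw [sum_exp_neg_ipXi_split hr (fun k ρ h => by rw [uX, if_neg h])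
      (fun a : Acode H i => a.val) κ,
    Vbar, Vsm, exp_mul_neg_softmin hκ, mul_add, exp_add, exp_mul_neg_softmin hκ]
  simp [uX]

theorem sum_exp_neg_ipXi_vX (hij : H j i ≠ 0) (hr : r ≠ 0) (hκ : κ ≠ 0)
    (vh : Isupp H j → {ρ : R // ρ ≠ 0} → ℝ)
    [Nonempty {b : Bcode H j // b.val ⟨i, hij⟩ = r}]
    [Nonempty {b : Bcode H j // b.val ⟨i, hij⟩ ≠ r}] (x : ℝ) :
    ∑ b : Bcode H j, exp (-κ * ipXi (fun k ρ => -(vX vh ⟨i, hij⟩ r x k ρ)) b.val)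
      = exp (κ * Cbar H j i hij r κ vh) + exp (κ * (Csm H j i hij r κ vh - x)) := by
  rw [sum_exp_neg_ipXi_split hr (fun k ρ h => by rw [vX, if_neg h])
      (fun b : Bcode H j => b.val) κ,
    Cbar, Csm, exp_mul_neg_softmin hκ, sub_eq_add_neg, mul_add, exp_add,
    exp_mul_neg_softmin hκ]
  simp [vX]

end LocalCodes

theorem hhat_unique_max_general [Ring R] [Fintype R]
    {m n : ℕ} (H : Matrix (Fin m) (Fin n) R)
    (j : Fin m) (i : Fin n) (hij : H j i ≠ 0) (r : R) (hr : r ≠ 0)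
    (κ : ℝ) (hκ : 0 < κ)
    (uh : Option (Jsupp H i) → {ρ : R // ρ ≠ 0} → ℝ)
    (vh : Isupp H j → {ρ : R // ρ ≠ 0} → ℝ)
    (hB1 : Nonempty {b : Bcode H j // b.val ⟨i, hij⟩ = r})
    (hB2 : Nonempty {b : Bcode H j // b.val ⟨i, hij⟩ ≠ r}) :
    (∀ y : ℝ, hhat H j i hij r κ uh vh y
        ≤ hhat H j i hij r κ uh vh
            ((1 / 2) * ((Vbar H j i hij r κ uh - Vsm H j i hij r κ uh)
              - (Cbar H j i hij r κ vh - Csm H j i hij r κ vh)))) ∧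
      (∀ y : ℝ, (∀ z : ℝ, hhat H j i hij r κ uh vh z ≤ hhat H j i hij r κ uh vh y) →
        y = (1 / 2) * ((Vbar H j i hij r κ uh - Vsm H j i hij r κ uh)
              - (Cbar H j i hij r κ vh - Csm H j i hij r κ vh))) :=
  neg_log_exp_add_exp_unique_max hκ _ _ _ _ _ fun x => by
    rw [hhat, softmin, softmin, sum_exp_neg_ipXi_uX hij hr hκ.ne',
      sum_exp_neg_ipXi_vX hij hr hκ.ne' vh]

/-- (Lemma 1) The function `ĥ : ℝ → ℝ` attains its maximum at a unique point `x*`, given by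
`x* = (1/2)·((V̄ − V) − (C̄ − C))`. -/
theorem hhat_unique_max [Ring R] [Fintype R] [DecidableEq R]
    (hq : 2 ≤ Fintype.card R) {m n : ℕ} (H : Matrix (Fin m) (Fin n) R)
    (j : Fin m) (i : Fin n) (hij : H j i ≠ 0) (r : R) (hr : r ≠ 0)
    (κ : ℝ) (hκ : 0 < κ)
    (uh : Option (Jsupp H i) → {ρ : R // ρ ≠ 0} → ℝ)
    (vh : Isupp H j → {ρ : R // ρ ≠ 0} → ℝ)
    (hcouple : ∀ ρ, uh (some ⟨j, hij⟩) ρ = -(vh ⟨i, hij⟩ ρ))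
    (hB1 : Nonempty {b : Bcode H j // b.val ⟨i, hij⟩ = r})
    (hB2 : Nonempty {b : Bcode H j // b.val ⟨i, hij⟩ ≠ r}) :
    (∀ y : ℝ, hhat H j i hij r κ uh vh y
        ≤ hhat H j i hij r κ uh vh
            ((1 / 2) * ((Vbar H j i hij r κ uh - Vsm H j i hij r κ uh)
              - (Cbar H j i hij r κ vh - Csm H j i hij r κ vh)))) ∧
      (∀ y : ℝ, (∀ z : ℝ, hhat H j i hij r κ uh vh z ≤ hhat H j i hij r κ uh vh y) →
        y = (1 / 2) * ((Vbar H j i hij r κ uh - Vsm H j i hij r κ uh)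
              - (Cbar H j i hij r κ vh - Csm H j i hij r κ vh))) :=
  hhat_unique_max_general H j i hij r hr κ hκ uh vh hB1 hB2
end
end

section
/- For every κ > 0 and all reals V̄, V, C̄, C, the function f : ℝ → ℝ defined by f(x) = −(1/κ)·log(e^{κV̄} + e^{κ(V+x)}) − (1/κ)·log(e^{κC̄} + e^{κ(C−x)}) is strictly concave on ℝ and attains its maximum at the unique point x* = ((V̄ − V) − (C̄ − C))/2. -/
/-!
Since `log (exp a + exp b) = a + softplus (b - a)`, the objective is a constant minus
`(softplus (κ (V - V̄ + x)) + softplus (-κ (C̄ - C + x))) / κ`. Softplus is strictly convex (its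
derivative is the sigmoid), so `f` is strictly concave. At `x = x* ± h` the two softplus arguments
are `κ (d ± h)` and `κ (d ∓ h)` for the same `d`, so `f` is symmetric about `x*`, and a strictly
concave function symmetric about a point has its unique maximum there.
-/

/-- The scalar per-coordinate objective
`f(x) = −(1/κ)·log(e^{κV̄} + e^{κ(V+x)}) − (1/κ)·log(e^{κC̄} + e^{κ(C−x)})`. -/
noncomputable def scalarObj (κ Vb V Cb C : ℝ) (x : ℝ) : ℝ :=
  -(1 / κ) * Real.log (Real.exp (κ * Vb) + Real.exp (κ * (V + x)))
    - (1 / κ) * Real.log (Real.exp (κ * Cb) + Real.exp (κ * (C - x)))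

open Real Set

noncomputable def softplus (t : ℝ) : ℝ := log (1 + exp t)

lemma hasDerivAt_softplus (t : ℝ) : HasDerivAt softplus (sigmoid t) t := by
  refine (((hasDerivAt_exp t).const_add 1).log (by positivity)).congr_deriv ?_
  rw [sigmoid_def, exp_neg]
  field_simp
  ring

lemma strictConvexOn_softplus : StrictConvexOn ℝ univ softplus := by
  refine StrictMono.strictConvexOn_univ_of_deriv
    (continuous_iff_continuousAt.2 fun t => (hasDerivAt_softplus t).continuousAt) ?_
  rw [funext fun t => (hasDerivAt_softplus t).deriv]
  exact sigmoid_strictMono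

lemma log_exp_add_exp (a b : ℝ) : log (exp a + exp b) = a + softplus (b - a) := by
  rw [softplus, ← log_exp a, ← log_mul (exp_pos a).ne' (by positivity), mul_add, mul_one,
    ← exp_add, log_exp, add_sub_cancel]

lemma StrictConvexOn.comp_mul_add {φ : ℝ → ℝ} (hφ : StrictConvexOn ℝ univ φ) {c : ℝ} (hc : c ≠ 0)
    (a : ℝ) : StrictConvexOn ℝ univ fun x => φ (c * (a + x)) := by
  refine ⟨convex_univ, fun x _ y _ hxy s t hs ht hst => ?_⟩
  have hne : c * (a + x) ≠ c * (a + y) := by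
    simpa [hc] using hxy
  convert hφ.2 (mem_univ _) (mem_univ _) hne hs ht hst using 2
  simp only [smul_eq_mul]
  linear_combination -c * a * hst

lemma StrictConvexOn.const_sub_div {E : Type*} [AddCommGroup E] [Module ℝ E] {s : Set E}
    {g : E → ℝ} (hg : StrictConvexOn ℝ s g) (c : ℝ) {κ : ℝ} (hκ : 0 < κ) :
    StrictConcaveOn ℝ s fun x => c - g x / κ := by
  refine ⟨hg.1, fun x hx y hy hxy a b ha hb hab => ?_⟩
  have key := hg.2 hx hy hxy ha hb hab
  simp only [smul_eq_mul] at key ⊢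
  calc a * (c - g x / κ) + b * (c - g y / κ) = c - (a * g x + b * g y) / κ := by
        field_simp; linear_combination κ * c * hab
    _ < c - g (a • x + b • y) / κ := by gcongr

lemma StrictConcaveOn.lt_of_map_add_eq_map_sub {E : Type*} [AddCommGroup E] [Module ℝ E]
    {f : E → ℝ} (hf : StrictConcaveOn ℝ univ f) {m : E} (hsymm : ∀ h, f (m + h) = f (m - h))
    {y : E} (hy : y ≠ m) : f y < f m := by
  have hne : m + (y - m) ≠ m - (y - m) := by
    intro h
    have h2 : (2 : ℝ) • (y - m) = 0 := by linear_combination (norm := module) h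
    exact hy (sub_eq_zero.1 ((smul_eq_zero.1 h2).resolve_left two_ne_zero))
  have hmid : (1 / 2 : ℝ) • (m + (y - m)) + (1 / 2 : ℝ) • (m - (y - m)) = m := by module
  have key := hf.2 (mem_univ _) (mem_univ _) hne (half_pos one_pos) (half_pos one_pos)
    (add_halves 1)
  rw [hmid, ← hsymm, add_sub_cancel, smul_eq_mul] at key
  linarith

section

variable {κ : ℝ} (Vb V Cb C : ℝ)

lemma scalarObj_eq_softplus (hκ : κ ≠ 0) (x : ℝ) :
    scalarObj κ Vb V Cb C x =
      -(Vb + Cb) - (softplus (κ * (V - Vb + x)) + softplus (-κ * (Cb - C + x))) / κ := by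
  rw [scalarObj, log_exp_add_exp, log_exp_add_exp]
  field_simp
  ring_nf

lemma strictConcaveOn_scalarObj (hκ : 0 < κ) : StrictConcaveOn ℝ univ (scalarObj κ Vb V Cb C) := by
  exact ((strictConvexOn_softplus.comp_mul_add hκ.ne' _).add
    (strictConvexOn_softplus.comp_mul_add (neg_ne_zero.2 hκ.ne') _)).const_sub_div _ hκ |>.congr
    fun x _ => (scalarObj_eq_softplus Vb V Cb C hκ.ne' x).symm

lemma scalarObj_add_eq_scalarObj_sub (hκ : κ ≠ 0) (h : ℝ) :
    scalarObj κ Vb V Cb C ((Vb - V - (Cb - C)) / 2 + h) =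
      scalarObj κ Vb V Cb C ((Vb - V - (Cb - C)) / 2 - h) := by
  rw [scalarObj_eq_softplus _ _ _ _ hκ, scalarObj_eq_softplus _ _ _ _ hκ, add_comm (softplus _)]
  ring_nf

end

/-- For every κ > 0 and all reals V̄, V, C̄, C, the function `f` is strictly concave on ℝ and
attains its maximum at the unique point `x* = ((V̄ − V) − (C̄ − C))/2`. -/
theorem scalarObj_strictConcave_and_unique_max (κ Vb V Cb C : ℝ) (hκ : 0 < κ) :
    StrictConcaveOn ℝ Set.univ (scalarObj κ Vb V Cb C) ∧
      (∀ y : ℝ, scalarObj κ Vb V Cb C y ≤ scalarObj κ Vb V Cb C (((Vb - V) - (Cb - C)) / 2)) ∧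
      (∀ y : ℝ, (∀ z : ℝ, scalarObj κ Vb V Cb C z ≤ scalarObj κ Vb V Cb C y) →
        y = ((Vb - V) - (Cb - C)) / 2) := by
  have hconc := strictConcaveOn_scalarObj Vb V Cb C hκ
  have hlt : ∀ y ≠ ((Vb - V) - (Cb - C)) / 2,
      scalarObj κ Vb V Cb C y < scalarObj κ Vb V Cb C (((Vb - V) - (Cb - C)) / 2) :=
    fun _ hy => hconc.lt_of_map_add_eq_map_sub (scalarObj_add_eq_scalarObj_sub Vb V Cb C hκ.ne') hy
  refine ⟨hconc, fun y => ?_, fun y hy => ?_⟩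
  · rcases eq_or_ne y (((Vb - V) - (Cb - C)) / 2) with rfl | hne
    · exact le_rfl
    · exact (hlt y hne).le
  · by_contra hne
    exact (hy _).not_gt (hlt y hne)
end
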